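/- Success probability of the quantum strategy for the Parity Bending Problem: fix n ≥ 1 and m : ℕ, let ω = exp(2π·i·m/3) ∈ ℂ, and define ψ : (Fin n → Bool) → ℂ by ψ(all-false) = 1/√2, ψ(all-true) = ω/√2, and ψ(v) = 0 otherwise. Let H_n be the n-qubit Hadamard transform, (H_n ψ)(y) = 2^{−n/2}·∑_{v} (−1)^{⟨v,y⟩}·ψ(v), where ⟨v,y⟩ counts the indices i with v_i = y_i = true. Then: if m ≡ 0 (mod 3), the sum of |(H_n ψ)(y)|² over all y of even Hamming weight equals 1; and if m ≢ 0 (mod 3), the sum of |(H_n ψ)(y)|² over all y of odd Hamming weight equals 3/4. -/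

import Mathlib

/-- Hamming weight of a Boolean string. -/
def hamming {n : ℕ} (x : Fin n → Bool) : ℕ :=
  (Finset.univ.filter fun i => x i = true).card

/-- `inn u v` is the number of indices `i` with `u i = v i = true`. -/
def inn {n : ℕ} (u v : Fin n → Bool) : ℕ :=
  (Finset.univ.filter fun i => u i = true ∧ v i = true).card

/-- The state `( |0^n⟩ + ω |1^n⟩ )/√2` with `ω = exp(2πi·m/3)`, i.e. the cat state after
the controlled-phase layer of the Parity Bending circuit on an input of Hamming weight `m`. -/
noncomputable def pbpState (n m : ℕ) : (Fin n → Bool) → ℂ :=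
  fun v =>
    if v = (fun _ => false) then 1 / (Real.sqrt 2 : ℂ)
    else if v = (fun _ => true) then
      Complex.exp (2 * (Real.pi : ℂ) * Complex.I * (m : ℂ) / 3) / (Real.sqrt 2 : ℂ)
    else 0

/-- The `n`-qubit Hadamard transform: `(H_n ψ)(y) = 2^{−n/2} ∑_v (−1)^{⟨v,y⟩} ψ(v)`. -/
noncomputable def hadamardTransform (n : ℕ) (ψ : (Fin n → Bool) → ℂ)
    (y : Fin n → Bool) : ℂ :=
  ((Real.sqrt 2 : ℂ) ^ n)⁻¹ * ∑ v, (-1 : ℂ) ^ inn v y * ψ v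

/-!
After the phase layer the state is `(|0ⁿ⟩ + ω|1ⁿ⟩)/√2`, so its Hadamard transform at `y` is
`(1 + (-1)^|y| ω) / √2^(n+1)`, which depends only on the parity of `|y|`. Each parity class
contains `2^(n-1)` strings, so the probability of measuring parity `r` is `‖1 + (-1)^r ω‖² / 4`.
For `3 ∣ m` we have `ω = 1`, giving `4/4` for even parity; otherwise `ω` is a primitive cube root
of unity and `‖1 - ω‖² = 2 - ω - ω² = 3`, giving `3/4` for odd parity.
-/

open Finset

noncomputable def pbpPhase (m : ℕ) : ℂ :=
  Complex.exp (2 * (Real.pi : ℂ) * Complex.I * (m : ℂ) / 3)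

lemma pbpPhase_eq_one {m : ℕ} (hm : 3 ∣ m) : pbpPhase m = 1 := by
  obtain ⟨k, rfl⟩ := hm
  rw [pbpPhase, Complex.exp_eq_one_iff]
  exact ⟨k, by push_cast; ring⟩

lemma isPrimitiveRoot_pbpPhase {m : ℕ} (hm : ¬3 ∣ m) : IsPrimitiveRoot (pbpPhase m) 3 := by
  have h := Complex.isPrimitiveRoot_exp_of_coprime m 3 three_ne_zero
    ((Nat.prime_three.coprime_iff_not_dvd.2 hm).symm)
  rwa [Nat.cast_ofNat, ← mul_div_assoc] at h

lemma IsPrimitiveRoot.normSq_one_sub_of_three {ζ : ℂ} (hζ : IsPrimitiveRoot ζ 3) :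
    Complex.normSq (1 - ζ) = 3 := by
  have hsum : 1 + ζ + ζ ^ 2 = 0 := by
    simpa [sum_range_succ] using hζ.geom_sum_eq_zero (by norm_num)
  have hconj : (starRingEnd ℂ) ζ = ζ ^ 2 := by
    rw [← Complex.inv_eq_conj (hζ.norm'_eq_one three_ne_zero)]
    exact inv_eq_of_mul_eq_one_right (by rw [← pow_succ', hζ.pow_eq_one])
  have h : ((Complex.normSq (1 - ζ) : ℝ) : ℂ) = 3 := by
    rw [← Complex.mul_conj, map_sub, map_one, hconj]
    linear_combination (-1 : ℂ) * hsum + hζ.pow_eq_one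
  exact_mod_cast h

section Hadamard

variable {n : ℕ}

lemma const_false_ne_const_true (hn : 0 < n) : (fun _ => false : Fin n → Bool) ≠ fun _ => true :=
  fun h => Bool.false_ne_true (congrFun h ⟨0, hn⟩)

lemma inn_const_false (y : Fin n → Bool) : inn (fun _ => false) y = 0 := by
  simp [inn]

lemma inn_const_true (y : Fin n → Bool) : inn (fun _ => true) y = hamming y := by
  simp [inn, hamming]

lemma hadamardTransform_of_support_const (hn : 0 < n) {ψ : (Fin n → Bool) → ℂ}
    (hψ : ∀ v, v ≠ (fun _ => false) ∧ v ≠ (fun _ => true) → ψ v = 0) (y : Fin n → Bool) :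
    hadamardTransform n ψ y = ((Real.sqrt 2 : ℂ) ^ n)⁻¹ *
      (ψ (fun _ => false) + (-1) ^ hamming y * ψ (fun _ => true)) := by
  rw [hadamardTransform, Fintype.sum_eq_add _ _ (const_false_ne_const_true hn)
    (fun v hv => by rw [hψ v hv, mul_zero]), inn_const_false, inn_const_true, pow_zero, one_mul]

lemma hadamardTransform_pbpState (hn : 0 < n) (m : ℕ) (y : Fin n → Bool) :
    hadamardTransform n (pbpState n m) y =
      (1 + (-1) ^ (hamming y % 2) * pbpPhase m) / (Real.sqrt 2 : ℂ) ^ (n + 1) := by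
  rw [hadamardTransform_of_support_const hn (fun v hv => by simp [pbpState, hv.1, hv.2]),
    ← neg_one_pow_eq_pow_mod_two]
  simp only [pbpState, if_true, if_neg (const_false_ne_const_true hn),
    if_neg (const_false_ne_const_true hn).symm, pbpPhase]
  ring

lemma norm_sq_hadamardTransform_pbpState (hn : 0 < n) (m : ℕ) (y : Fin n → Bool) :
    ‖hadamardTransform n (pbpState n m) y‖ ^ 2 =
      ‖1 + (-1) ^ (hamming y % 2) * pbpPhase m‖ ^ 2 / 2 ^ (n + 1) := by
  rw [hadamardTransform_pbpState hn, norm_div, norm_pow, div_pow, Complex.norm_real,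
    Real.norm_of_nonneg (Real.sqrt_nonneg 2), ← pow_mul, mul_comm (n + 1), pow_mul,
    Real.sq_sqrt zero_le_two]

lemma neg_one_pow_hamming (y : Fin n → Bool) :
    (-1 : ℤ) ^ hamming y = ∏ i, if y i then -1 else 1 := by
  rw [hamming, prod_ite, prod_const, prod_const_one, mul_one]

lemma sum_neg_one_pow_hamming (hn : 0 < n) : ∑ y : Fin n → Bool, (-1 : ℤ) ^ hamming y = 0 := by
  simp_rw [neg_one_pow_hamming, ← Fintype.prod_sum (fun _ b => if b = true then (-1 : ℤ) else 1)]
  exact prod_eq_zero (mem_univ ⟨0, hn⟩) (by simp)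

lemma card_filter_hamming_mod_two (hn : 0 < n) {r : ℕ} (hr : r < 2) :
    #{y : Fin n → Bool | hamming y % 2 = r} = 2 ^ (n - 1) := by
  have hindicator : ∀ y : Fin n → Bool,
      2 * ((if hamming y % 2 = r then 1 else 0 : ℕ) : ℤ) = 1 + (-1) ^ r * (-1) ^ hamming y := by
    intro y
    rw [neg_one_pow_eq_pow_mod_two (hamming y)]
    have := Nat.mod_lt (hamming y) two_pos
    interval_cases r <;> interval_cases hamming y % 2 <;> norm_num
  have hdouble : (2 * #{y : Fin n → Bool | hamming y % 2 = r} : ℤ) = 2 ^ n := by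
    simp_rw [card_filter, Nat.cast_sum, mul_sum, hindicator, sum_add_distrib, ← mul_sum,
      sum_neg_one_pow_hamming hn]
    simp
  obtain ⟨k, rfl⟩ : ∃ k, n = k + 1 := ⟨n - 1, by omega⟩
  rw [pow_succ] at hdouble
  simp only [Nat.add_sub_cancel]
  exact_mod_cast (mul_left_cancel₀ two_ne_zero (hdouble.trans (mul_comm _ _)))

lemma sum_norm_sq_hadamardTransform_pbpState (hn : 0 < n) (m : ℕ) {r : ℕ} (hr : r < 2) :
    ∑ y ∈ univ.filter (fun y : Fin n → Bool => hamming y % 2 = r),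
      ‖hadamardTransform n (pbpState n m) y‖ ^ 2 = ‖1 + (-1) ^ r * pbpPhase m‖ ^ 2 / 4 := by
  rw [sum_congr rfl fun y hy => by rw [norm_sq_hadamardTransform_pbpState hn, (mem_filter.1 hy).2],
    sum_const, card_filter_hamming_mod_two hn hr, nsmul_eq_mul]
  obtain ⟨k, rfl⟩ : ∃ k, n = k + 1 := ⟨n - 1, by omega⟩
  simp only [Nat.add_sub_cancel]
  push_cast
  field_simp
  ring

end Hadamard

/-- Success probability of the quantum strategy for the Parity Bending Problem:
if `m ≡ 0 (mod 3)` the measured string has even Hamming weight with probability `1`, and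
otherwise it has odd Hamming weight with probability exactly `3/4`. -/
theorem pbp_quantum_strategy (n m : ℕ) (hn : 1 ≤ n) :
    (m % 3 = 0 →
      ∑ y ∈ Finset.univ.filter (fun y : Fin n → Bool => hamming y % 2 = 0),
        ‖hadamardTransform n (pbpState n m) y‖ ^ 2 = 1) ∧
    (m % 3 ≠ 0 →
      ∑ y ∈ Finset.univ.filter (fun y : Fin n → Bool => hamming y % 2 = 1),
        ‖hadamardTransform n (pbpState n m) y‖ ^ 2 = 3 / 4) := by
  refine ⟨fun hm => ?_, fun hm => ?_⟩
  · rw [sum_norm_sq_hadamardTransform_pbpState hn m two_pos,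
      pbpPhase_eq_one (Nat.dvd_of_mod_eq_zero hm)]
    norm_num
  · rw [sum_norm_sq_hadamardTransform_pbpState hn m one_lt_two, pow_one, neg_one_mul,
      ← sub_eq_add_neg, ← Complex.normSq_eq_norm_sq,
      (isPrimitiveRoot_pbpPhase (by omega)).normSq_one_sub_of_three]
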